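/- arXiv:2001.05417 — 4 statements merged into one kernel-verified Lean document; each statement's English description precedes it below -/
import Mathlib

section
/- For a triple of twists, the polynomial [v₁, ω₂, ω₃] + [ω₁, v₂, ω₃] + [ω₁, ω₂, v₃] is invariant under the simultaneous adjoint action of SE(3): it is unchanged when each (ωᵢ, vᵢ) is replaced by (Rωᵢ, (Rωᵢ)×r + Rvᵢ). -/
open Matrix

/-- Determinant of the 3×3 matrix with columns `a`, `b`, `c`. -/
def colDet (a b c : Fin 3 → ℝ) : ℝ := Matrix.det (Matrix.of ![a, b, c])ᵀ

/-!
The polynomial is the derivative at `t = 0` of `colDet (ω₁ + t v₁) (ω₂ + t v₂) (ω₃ + t v₃)`,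
so its invariance splits into two facts. The rotation part multiplies every column by `R`, which
scales each determinant by `det R = 1`. The translation part adds `ωᵢ × r` to `vᵢ`, and
`x ↦ x × r` is a trace-free linear map, so by the derivation rule
`[Aa, b, c] + [a, Ab, c] + [a, b, Ac] = tr A · [a, b, c]` its contribution vanishes.
-/

lemma colDet_eq_dotProduct_cross (a b c : Fin 3 → ℝ) : colDet a b c = a ⬝ᵥ b ⨯₃ c := by
  rw [colDet, det_transpose, triple_product_eq_det]
  rfl

lemma colDet_add_left (x y b c : Fin 3 → ℝ) :
    colDet (x + y) b c = colDet x b c + colDet y b c := by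
  simp only [colDet_eq_dotProduct_cross, add_dotProduct]

lemma colDet_add_middle (a x y c : Fin 3 → ℝ) :
    colDet a (x + y) c = colDet a x c + colDet a y c := by
  simp only [colDet_eq_dotProduct_cross, map_add, LinearMap.add_apply, dotProduct_add]

lemma colDet_add_right (a b x y : Fin 3 → ℝ) :
    colDet a b (x + y) = colDet a b x + colDet a b y := by
  simp only [colDet_eq_dotProduct_cross, map_add, dotProduct_add]

lemma colDet_mulVec (R : Matrix (Fin 3) (Fin 3) ℝ) (a b c : Fin 3 → ℝ) :
    colDet (R *ᵥ a) (R *ᵥ b) (R *ᵥ c) = R.det * colDet a b c := by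
  have hcols : (Matrix.of ![R *ᵥ a, R *ᵥ b, R *ᵥ c])ᵀ = R * (Matrix.of ![a, b, c])ᵀ := by
    ext i j
    fin_cases j <;> simp [mul_apply, mulVec, dotProduct]
  rw [colDet, hcols, det_mul, colDet]

lemma colDet_mulVec_derivation (A : Matrix (Fin 3) (Fin 3) ℝ) (a b c : Fin 3 → ℝ) :
    colDet (A *ᵥ a) b c + colDet a (A *ᵥ b) c + colDet a b (A *ᵥ c) = A.trace * colDet a b c := by
  simp only [colDet_eq_dotProduct_cross, cross_apply, dotProduct, mulVec, trace, diag,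
    Fin.sum_univ_three, Fin.isValue, cons_val_zero, cons_val_one, cons_val]
  ring

def crossRightMatrix (r : Fin 3 → ℝ) : Matrix (Fin 3) (Fin 3) ℝ :=
  !![0, r 2, -r 1; -r 2, 0, r 0; r 1, -r 0, 0]

lemma crossRightMatrix_mulVec (r a : Fin 3 → ℝ) : crossRightMatrix r *ᵥ a = a ⨯₃ r := by
  ext i
  fin_cases i <;> simp [crossRightMatrix, cross_apply, mulVec, dotProduct, Fin.sum_univ_three] <;>
    ring

lemma trace_crossRightMatrix (r : Fin 3 → ℝ) : (crossRightMatrix r).trace = 0 := by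
  simp [crossRightMatrix, trace, Fin.sum_univ_three]

lemma colDet_cross_derivation (a b c r : Fin 3 → ℝ) :
    colDet (a ⨯₃ r) b c + colDet a (b ⨯₃ r) c + colDet a b (c ⨯₃ r) = 0 := by
  simpa only [crossRightMatrix_mulVec, trace_crossRightMatrix, zero_mul] using
    colDet_mulVec_derivation (crossRightMatrix r) a b c

theorem triple_mixed_det_sum_invariant_general
    (R : Matrix (Fin 3) (Fin 3) ℝ) (hdet : R.det = 1)
    (r ω₁ v₁ ω₂ v₂ ω₃ v₃ : Fin 3 → ℝ) :
    colDet ((R.mulVec ω₁) ⨯₃ r + R.mulVec v₁) (R.mulVec ω₂) (R.mulVec ω₃)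
      + colDet (R.mulVec ω₁) ((R.mulVec ω₂) ⨯₃ r + R.mulVec v₂) (R.mulVec ω₃)
      + colDet (R.mulVec ω₁) (R.mulVec ω₂) ((R.mulVec ω₃) ⨯₃ r + R.mulVec v₃)
      = colDet v₁ ω₂ ω₃ + colDet ω₁ v₂ ω₃ + colDet ω₁ ω₂ v₃ := by
  have htranslation := colDet_cross_derivation (R *ᵥ ω₁) (R *ᵥ ω₂) (R *ᵥ ω₃) r
  rw [colDet_add_left, colDet_add_middle, colDet_add_right]
  simp only [colDet_mulVec, hdet, one_mul]
  linarith

theorem triple_mixed_det_sum_invariant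
    (R : Matrix (Fin 3) (Fin 3) ℝ) (hR : Rᵀ * R = 1) (hdet : R.det = 1)
    (r ω₁ v₁ ω₂ v₂ ω₃ v₃ : Fin 3 → ℝ) :
    colDet ((R.mulVec ω₁) ⨯₃ r + R.mulVec v₁) (R.mulVec ω₂) (R.mulVec ω₃)
      + colDet (R.mulVec ω₁) ((R.mulVec ω₂) ⨯₃ r + R.mulVec v₂) (R.mulVec ω₃)
      + colDet (R.mulVec ω₁) (R.mulVec ω₂) ((R.mulVec ω₃) ⨯₃ r + R.mulVec v₃)
      = colDet v₁ ω₂ ω₃ + colDet ω₁ v₂ ω₃ + colDet ω₁ ω₂ v₃ :=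
  triple_mixed_det_sum_invariant_general R hdet r ω₁ v₁ ω₂ v₂ ω₃ v₃
end

section
/- Every polynomial in ℝ[ω₁, ω₂, ω₃, v₁, v₂, v₃] invariant under the adjoint action of SE(3) lies in the subalgebra ℝ[ω·ω, ω·v] generated by the Killing form ω·ω and the Klein form ω·v. -/
open Matrix MvPolynomial

/-- Coordinates of a twist `(ω, v)` as a point of `ℝ⁶`. -/
def twistCoords (ω v : Fin 3 → ℝ) : Fin 6 → ℝ := Fin.append ω v

/-!
Each homogeneous component of an invariant is again invariant, so let `f` be homogeneous of
degree `d`. The quaternion matrix `M(w, u)` is `N(w, u) • R` with `R ∈ SO(3)` and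
`N = w² + u ⬝ᵥ u`, so `f (M ω, M ω ⨯₃ r + M v) = N ^ d * f (ω, v)`. This is a polynomial identity in
`(w, u, r, ω, v)`, hence it also holds for complex arguments. Over `ℂ`, these scaled rotations
together with the translations carry every twist with `ω ⬝ᵥ ω = a ≠ 0` to a normal form
`(normalAxis a, normalMoment (ω ⬝ᵥ v))` that depends polynomially on `a` and `ω ⬝ᵥ v`. So
`f = P (ω ⬝ᵥ ω, ω ⬝ᵥ v)` wherever `ω ⬝ᵥ ω ≠ 0`, where `P` is the real part of
`f (normalAxis a, normalMoment b)`. Multiplying by the Killing form turns this into an identity of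
polynomials.
-/
theorem Fin.comp_append {α β : Type*} {m n : ℕ} (g : α → β) (a : Fin m → α) (b : Fin n → α) :
    g ∘ Fin.append a b = Fin.append (g ∘ a) (g ∘ b) := by
  ext j
  refine Fin.addCases (fun i => ?_) (fun i => ?_) j <;> simp

theorem Fin.smul_append {M α : Type*} [SMul M α] {m n : ℕ} (c : M) (a : Fin m → α)
    (b : Fin n → α) : c • Fin.append a b = Fin.append (c • a) (c • b) :=
  Fin.comp_append (c • ·) a b

namespace MvPolynomial

variable {σ τ R : Type*}

theorem eval_aeval [CommSemiring R] (x : τ → R) (g : σ → MvPolynomial τ R)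
    (p : MvPolynomial σ R) : eval x (aeval g p) = eval (fun i => eval x (g i)) p :=
  comp_aeval_apply (f := g) (aeval x) p

theorem IsHomogeneous.eval_smul [CommSemiring R] {p : MvPolynomial σ R} {d : ℕ}
    (hp : p.IsHomogeneous d) (c : R) (x : σ → R) :
    eval (c • x) p = c ^ d * eval x p := by
  rw [eval_eq, eval_eq, Finset.mul_sum]
  refine Finset.sum_congr rfl fun m hm => ?_
  have hdeg := (hp.degree_eq_sum_deg_support hm).symm
  simp_rw [Pi.smul_apply, smul_eq_mul, mul_pow, Finset.prod_mul_distrib,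
    Finset.prod_pow_eq_pow_sum, hdeg]
  ring

theorem IsHomogeneous.aeval_smul [CommSemiring R] {S : Type*} [CommSemiring S] [Algebra R S]
    {p : MvPolynomial σ R} {d : ℕ} (hp : p.IsHomogeneous d) (c : S) (x : σ → S) :
    MvPolynomial.aeval (c • x) p = c ^ d * MvPolynomial.aeval x p := by
  rw [aeval_def, aeval_def, eval₂_eq_eval_map, eval₂_eq_eval_map]
  exact (hp.map _).eval_smul c x

theorem aeval_homogeneousComponent [CommSemiring R] {g : σ → MvPolynomial τ R}
    (hg : ∀ i, (g i).IsHomogeneous 1) (d : ℕ) (p : MvPolynomial σ R) :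
    aeval g (homogeneousComponent d p) = homogeneousComponent d (aeval g p) := by
  have hcomp : ∀ n, (aeval g (homogeneousComponent n p)).IsHomogeneous n := fun n => by
    simpa using (homogeneousComponent_isHomogeneous n p).aeval g hg
  conv_rhs => rw [← sum_homogeneousComponent p, map_sum, map_sum]
  rw [Finset.sum_eq_single d]
  · rw [homogeneousComponent_of_mem (hcomp d), if_pos rfl]
  · intro n _ hn
    rw [homogeneousComponent_of_mem (hcomp n), if_neg (Ne.symm hn)]
  · intro hd
    rw [homogeneousComponent_eq_zero d p (by simpa [Nat.lt_succ_iff] using hd), map_zero,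
      map_zero]

noncomputable def rePart (p : MvPolynomial σ ℂ) : MvPolynomial σ ℝ :=
  AddMonoidAlgebra.map Complex.reAddGroupHom p

theorem coeff_rePart (p : MvPolynomial σ ℂ) (m : σ →₀ ℕ) :
    coeff m (rePart p) = (coeff m p).re := rfl

theorem eval_rePart (p : MvPolynomial σ ℂ) (x : σ → ℝ) :
    eval x (rePart p) = (eval (fun i => (x i : ℂ)) p).re := by
  induction p using MvPolynomial.induction_on' with
  | monomial m c =>
    have : rePart (monomial m c) = monomial m c.re := by
      classical
      ext m'
      simp only [coeff_rePart, coeff_monomial]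
      split_ifs <;> rfl
    rw [this, eval_monomial, eval_monomial, Finsupp.prod, Finsupp.prod]
    norm_cast
    rw [Complex.re_mul_ofReal]
  | add p q hp hq =>
    have : rePart (p + q) = rePart p + rePart q := by
      ext m
      simp only [coeff_rePart, coeff_add, Complex.add_re]
    rw [this, map_add, map_add, Complex.add_re, hp, hq]

end MvPolynomial

section TwistAction

variable {A B F : Type*} [CommRing A] [CommRing B] [FunLike F A B] [RingHomClass F A B]

def twistAct (M : Matrix (Fin 3) (Fin 3) A) (r ω v : Fin 3 → A) : Fin 6 → A :=
  Fin.append (M *ᵥ ω) ((M *ᵥ ω) ⨯₃ r + M *ᵥ v)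

theorem twistAct_smul (c : A) (M : Matrix (Fin 3) (Fin 3) A) (r ω v : Fin 3 → A) :
    twistAct (c • M) r ω v = c • twistAct M r ω v := by
  rw [twistAct, twistAct, smul_mulVec, smul_mulVec, LinearMap.map_smul₂, ← smul_add]
  exact (Fin.smul_append c _ _).symm

theorem comp_crossProduct (φ : F) (a b : Fin 3 → A) :
    φ ∘ (a ⨯₃ b) = (φ ∘ a) ⨯₃ (φ ∘ b) := by
  ext i
  fin_cases i <;> simp [cross_apply]

theorem comp_mulVec {m n : Type*} [Fintype n] (φ : F) (M : Matrix m n A)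
    (v : n → A) : φ ∘ (M *ᵥ v) = M.map φ *ᵥ (φ ∘ v) :=
  funext (RingHom.map_mulVec (φ : A →+* B) M v)

theorem comp_twistAct (φ : F) (M : Matrix (Fin 3) (Fin 3) A) (r ω v : Fin 3 → A) :
    φ ∘ twistAct M r ω v = twistAct (M.map φ) (φ ∘ r) (φ ∘ ω) (φ ∘ v) := by
  have comp_add (x y : Fin 3 → A) : φ ∘ (x + y) = φ ∘ x + φ ∘ y := funext fun _ => map_add φ _ _
  rw [twistAct, twistAct, Fin.comp_append (m := 3) (n := 3), comp_add,
    comp_crossProduct, comp_mulVec, comp_mulVec]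

end TwistAction

section Quaternion

variable {A B F : Type*} [CommRing A] [CommRing B] [FunLike F A B] [RingHomClass F A B]

/-- The matrix of `x ↦ q x q̄` for the quaternion `q = w + u 0 i + u 1 j + u 2 k`: it is
`quatNormSq w u` times a rotation. -/
def quatRot (w : A) (u : Fin 3 → A) : Matrix (Fin 3) (Fin 3) A :=
  !![w ^ 2 + u 0 ^ 2 - u 1 ^ 2 - u 2 ^ 2, 2 * (u 0 * u 1 - w * u 2), 2 * (u 0 * u 2 + w * u 1);
     2 * (u 0 * u 1 + w * u 2), w ^ 2 - u 0 ^ 2 + u 1 ^ 2 - u 2 ^ 2, 2 * (u 1 * u 2 - w * u 0);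
     2 * (u 0 * u 2 - w * u 1), 2 * (u 1 * u 2 + w * u 0), w ^ 2 - u 0 ^ 2 - u 1 ^ 2 + u 2 ^ 2]

def quatNormSq (w : A) (u : Fin 3 → A) : A := w ^ 2 + u ⬝ᵥ u

theorem quatRot_mulVec (w : A) (u x : Fin 3 → A) :
    quatRot w u *ᵥ x = (w ^ 2 - u ⬝ᵥ u) • x + (2 * (u ⬝ᵥ x)) • u + (2 * w) • (u ⨯₃ x) := by
  ext i
  fin_cases i <;> simp [quatRot, mulVec, dotProduct, Fin.sum_univ_three, cross_apply] <;> ring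

theorem quatRot_transpose_mul (w : A) (u : Fin 3 → A) :
    (quatRot w u)ᵀ * quatRot w u = quatNormSq w u ^ 2 • 1 := by
  ext i j
  rw [mul_apply, Fin.sum_univ_three]
  fin_cases i <;> fin_cases j <;> simp [quatRot, quatNormSq, vec3_dotProduct, one_apply] <;> ring

theorem det_quatRot (w : A) (u : Fin 3 → A) : (quatRot w u).det = quatNormSq w u ^ 3 := by
  simp only [quatRot, det_fin_three, of_apply, cons_val', cons_val_zero, cons_val_fin_one,
    cons_val_one, cons_val, quatNormSq, vec3_dotProduct]
  ring

theorem dotProduct_quatRot_mulVec (w : A) (u x y : Fin 3 → A) :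
    (quatRot w u *ᵥ x) ⬝ᵥ (quatRot w u *ᵥ y) = quatNormSq w u ^ 2 * (x ⬝ᵥ y) := by
  rw [dotProduct_mulVec, ← vecMul_transpose, vecMul_vecMul, ← dotProduct_mulVec,
    quatRot_transpose_mul, smul_mulVec, one_mulVec, dotProduct_smul, smul_eq_mul]

theorem quatRot_one_zero : quatRot (1 : A) 0 = 1 := by
  ext i j
  fin_cases i <;> fin_cases j <;> simp [quatRot]

theorem map_quatRot (φ : F) (w : A) (u : Fin 3 → A) :
    (quatRot w u).map φ = quatRot (φ w) (φ ∘ u) := by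
  ext i j
  fin_cases i <;> fin_cases j <;> simp [quatRot, map_ofNat]

theorem map_quatNormSq (φ : F) (w : A) (u : Fin 3 → A) :
    φ (quatNormSq w u) = quatNormSq (φ w) (φ ∘ u) := by
  simp [quatNormSq, dotProduct]

theorem quatRot_cross_mulVec {a : A} {ω ω' : Fin 3 → A} (hω : ω ⬝ᵥ ω = a) (hω' : ω' ⬝ᵥ ω' = a) :
    quatRot (a + ω ⬝ᵥ ω') (ω ⨯₃ ω') *ᵥ ω = (2 * a * (a + ω ⬝ᵥ ω')) • ω' := by
  rw [quatRot_mulVec, cross_dot_cross, dotProduct_comm (ω ⨯₃ ω'), dot_self_cross,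
    cross_cross_eq_smul_sub_smul, hω, hω', dotProduct_comm ω' ω]
  module

theorem quatNormSq_cross {a : A} {ω ω' : Fin 3 → A} (hω : ω ⬝ᵥ ω = a) (hω' : ω' ⬝ᵥ ω' = a) :
    quatNormSq (a + ω ⬝ᵥ ω') (ω ⨯₃ ω') = 2 * a * (a + ω ⬝ᵥ ω') := by
  rw [quatNormSq, cross_dot_cross, hω, hω', dotProduct_comm ω' ω]
  ring

theorem exists_rotation_smul_eq_quatRot (w : ℝ) (u : Fin 3 → ℝ) :
    ∃ R : Matrix (Fin 3) (Fin 3) ℝ, Rᵀ * R = 1 ∧ R.det = 1 ∧ quatRot w u = quatNormSq w u • R := by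
  by_cases hN : quatNormSq w u = 0
  · have hsq : w ^ 2 = 0 ∧ u ⬝ᵥ u = 0 :=
      (add_eq_zero_iff_of_nonneg (sq_nonneg w) (dotProduct_self_star_nonneg u)).mp hN
    have hw : w = 0 := pow_eq_zero_iff two_ne_zero |>.mp hsq.1
    have hu : u = 0 := dotProduct_self_eq_zero.mp hsq.2
    refine ⟨1, by simp, by simp, ?_⟩
    subst hw hu
    rw [hN, zero_smul]
    ext i j
    fin_cases i <;> fin_cases j <;> simp [quatRot]
  · refine ⟨(quatNormSq w u)⁻¹ • quatRot w u, ?_, ?_, ?_⟩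
    · rw [transpose_smul, smul_mul_smul_comm, quatRot_transpose_mul, smul_smul,
        show (quatNormSq w u)⁻¹ * (quatNormSq w u)⁻¹ * quatNormSq w u ^ 2 = 1 by field_simp,
        one_smul]
    · rw [det_smul, det_quatRot, Fintype.card_fin]
      field_simp
    · rw [smul_smul, mul_inv_cancel₀ hN, one_smul]

end Quaternion

def IsSE3Invariant (f : MvPolynomial (Fin 6) ℝ) : Prop :=
  ∀ R : Matrix (Fin 3) (Fin 3) ℝ, Rᵀ * R = 1 → R.det = 1 →
    ∀ r ω v : Fin 3 → ℝ, eval (twistAct R r ω v) f = eval (Fin.append ω v) f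

noncomputable def twistSubst (R : Matrix (Fin 3) (Fin 3) ℝ) (r : Fin 3 → ℝ) :
    Fin 6 → MvPolynomial (Fin 6) ℝ :=
  twistAct (R.map C) (C ∘ r) (X ∘ Fin.castAdd 3) (X ∘ Fin.natAdd 3)

theorem eval_twistSubst (R : Matrix (Fin 3) (Fin 3) ℝ) (r : Fin 3 → ℝ) (x : Fin 6 → ℝ) :
    (fun j => eval x (twistSubst R r j)) = twistAct R r (x ∘ Fin.castAdd 3) (x ∘ Fin.natAdd 3) := by
  change eval x ∘ twistSubst R r = _
  rw [twistSubst, comp_twistAct, Matrix.map_map]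
  simp [Function.comp_def]

theorem isHomogeneous_twistSubst (R : Matrix (Fin 3) (Fin 3) ℝ) (r : Fin 3 → ℝ) (j : Fin 6) :
    (twistSubst R r j).IsHomogeneous 1 := by
  have mulVec_hom (u : Fin 3 → MvPolynomial (Fin 6) ℝ) (hu : ∀ k, (u k).IsHomogeneous 1) (i) :
      ((R.map C *ᵥ u) i).IsHomogeneous 1 :=
    IsHomogeneous.sum _ _ _ fun k _ => by simpa using (hu k).C_mul (R i k)
  have hX (e : Fin 3 → Fin 6) (k) : ((X ∘ e) k : MvPolynomial (Fin 6) ℝ).IsHomogeneous 1 :=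
    isHomogeneous_X _ _
  have cross_hom (u : Fin 3 → MvPolynomial (Fin 6) ℝ) (hu : ∀ k, (u k).IsHomogeneous 1) (i) :
      ((u ⨯₃ (C ∘ r)) i).IsHomogeneous 1 := by
    rw [cross_apply]
    fin_cases i <;> simp only [Function.comp_apply, mul_comm (u _)] <;>
      exact ((hu _).C_mul _).sub ((hu _).C_mul _)
  refine Fin.addCases (m := 3) (n := 3) (fun i => ?_) (fun i => ?_) j
  · simpa [twistSubst, twistAct] using mulVec_hom _ (hX _) i
  · rw [twistSubst, twistAct, Fin.append_right]
    exact (cross_hom _ (mulVec_hom _ (hX _)) i).add (mulVec_hom _ (hX _) i)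

theorem IsSE3Invariant.homogeneousComponent {f : MvPolynomial (Fin 6) ℝ} (hf : IsSE3Invariant f)
    (d : ℕ) : IsSE3Invariant (MvPolynomial.homogeneousComponent d f) := by
  intro R hR hdet r ω v
  have eval_aeval_twistSubst (p : MvPolynomial (Fin 6) ℝ) (x : Fin 6 → ℝ) :
      eval x (aeval (twistSubst R r) p)
        = eval (twistAct R r (x ∘ Fin.castAdd 3) (x ∘ Fin.natAdd 3)) p := by
    rw [eval_aeval, eval_twistSubst]
  have hfix : aeval (twistSubst R r) f = f := MvPolynomial.funext fun x => by
    rw [eval_aeval_twistSubst, hf R hR hdet]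
    exact congrArg (eval · f) Fin.append_castAdd_natAdd
  have hfix_d := congrArg (eval (Fin.append ω v))
    (aeval_homogeneousComponent (isHomogeneous_twistSubst R r) d f)
  have hω : Fin.append ω v ∘ Fin.castAdd 3 = ω := funext (Fin.append_left ω v)
  have hv : Fin.append ω v ∘ Fin.natAdd 3 = v := funext (Fin.append_right ω v)
  rwa [hfix, eval_aeval_twistSubst, hω, hv] at hfix_d

def IsScaledQuatInvariant (A : Type*) [CommRing A] [Algebra ℝ A] (f : MvPolynomial (Fin 6) ℝ)
    (d : ℕ) : Prop :=
  ∀ (w : A) (u r ω v : Fin 3 → A),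
    aeval (twistAct (quatRot w u) r ω v) f = quatNormSq w u ^ d * aeval (Fin.append ω v) f

theorem IsSE3Invariant.isScaledQuatInvariant_real {f : MvPolynomial (Fin 6) ℝ} {d : ℕ}
    (hf : IsSE3Invariant f) (hd : f.IsHomogeneous d) : IsScaledQuatInvariant ℝ f d := by
  intro w u r ω v
  obtain ⟨R, hR, hdet, hquat⟩ := exists_rotation_smul_eq_quatRot w u
  rw [hquat, twistAct_smul, hd.aeval_smul]
  exact congrArg _ (hf R hR hdet r ω v)

section AlgHom

variable {A B : Type*} [CommRing A] [Algebra ℝ A] [CommRing B] [Algebra ℝ B] (φ : A →ₐ[ℝ] B)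
  (f : MvPolynomial (Fin 6) ℝ)

theorem AlgHom.map_aeval_twistAct (M : Matrix (Fin 3) (Fin 3) A) (r ω v : Fin 3 → A) :
    φ (aeval (twistAct M r ω v) f) = aeval (twistAct (M.map φ) (φ ∘ r) (φ ∘ ω) (φ ∘ v)) f := by
  rw [comp_aeval_apply]
  exact congrArg (aeval · f) (comp_twistAct φ M r ω v)

theorem AlgHom.map_aeval_append (ω v : Fin 3 → A) :
    φ (aeval (Fin.append ω v) f) = aeval (Fin.append (φ ∘ ω) (φ ∘ v)) f := by
  rw [comp_aeval_apply]
  exact congrArg (aeval · f) (Fin.comp_append φ ω v)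

theorem AlgHom.map_aeval_twistAct_quatRot (w : A) (u r ω v : Fin 3 → A) :
    φ (aeval (twistAct (quatRot w u) r ω v) f)
      = aeval (twistAct (quatRot (φ w) (φ ∘ u)) (φ ∘ r) (φ ∘ ω) (φ ∘ v)) f := by
  rw [φ.map_aeval_twistAct, map_quatRot]

end AlgHom

theorem IsScaledQuatInvariant.of_real {f : MvPolynomial (Fin 6) ℝ} {d : ℕ}
    (hf : IsScaledQuatInvariant ℝ f d) (A : Type*) [CommRing A] [Algebra ℝ A] :
    IsScaledQuatInvariant A f d := by
  let vecVar (k : Fin 4) : Fin 3 → MvPolynomial (Option (Fin 4 × Fin 3)) ℝ :=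
    fun i => X (some (k, i))
  have generic : aeval (twistAct (quatRot (X none) (vecVar 0)) (vecVar 1) (vecVar 2) (vecVar 3)) f
      = quatNormSq (X none) (vecVar 0) ^ d * aeval (Fin.append (vecVar 2) (vecVar 3)) f := by
    refine MvPolynomial.funext fun t => ?_
    have hvar (k : Fin 4) : aeval t ∘ vecVar k = fun i => t (some (k, i)) := by
      funext i
      simp only [Function.comp_apply, vecVar, aeval_X]
    change aeval t _ = aeval t _
    rw [AlgHom.map_aeval_twistAct_quatRot, map_mul, map_pow, map_quatNormSq,
      AlgHom.map_aeval_append, aeval_X, hvar, hvar, hvar, hvar]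
    exact hf _ _ _ _ _
  intro w u r ω v
  let z : Option (Fin 4 × Fin 3) → A := fun o => o.elim w fun p => ![u, r, ω, v] p.1 p.2
  have hvar (k : Fin 4) : aeval z ∘ vecVar k = ![u, r, ω, v] k := by
    funext i
    simp only [Function.comp_apply, vecVar, aeval_X]
    rfl
  have := congrArg (aeval z) generic
  rwa [AlgHom.map_aeval_twistAct_quatRot, map_mul, map_pow, map_quatNormSq,
    AlgHom.map_aeval_append, aeval_X, hvar, hvar, hvar, hvar] at this

section NormalAxis

variable {A B : Type*} [CommRing A] [Algebra ℂ A] [CommRing B] [Algebra ℂ B]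

/-- Over `ℂ` the quadric `ω ⬝ᵥ ω = a` has a point depending polynomially on `a`; over `ℝ` it has
none, which is why the argument passes through complex twists. -/
noncomputable def normalAxis (a : A) : Fin 3 → A :=
  ![(2⁻¹ : ℂ) • (1 + a), (Complex.I / 2) • (1 - a), 0]

def normalMoment (b : A) : Fin 3 → A := ![b, -(Complex.I • b), 0]

theorem comp_normalAxis (φ : A →ₐ[ℂ] B) (a : A) : φ ∘ normalAxis a = normalAxis (φ a) := by
  ext i
  fin_cases i <;> simp [normalAxis]

theorem comp_normalMoment (φ : A →ₐ[ℂ] B) (b : A) : φ ∘ normalMoment b = normalMoment (φ b) := by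
  ext i
  fin_cases i <;> simp [normalMoment]

theorem normalAxis_dotProduct_self (a : ℂ) : normalAxis a ⬝ᵥ normalAxis a = a := by
  simp only [normalAxis, smul_eq_mul, dotProduct_cons, head_cons, tail_cons, mul_zero,
    dotProduct_of_isEmpty, add_zero]
  linear_combination ((1 - a) ^ 2 / 4) * Complex.I_sq

theorem normalAxis_dotProduct_normalMoment (a b : ℂ) : normalAxis a ⬝ᵥ normalMoment b = b := by
  simp only [normalAxis, smul_eq_mul, normalMoment, dotProduct_cons, head_cons, tail_cons, mul_neg,
    mul_zero, dotProduct_of_isEmpty, add_zero]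
  linear_combination (-(b * (1 - a)) / 2) * Complex.I_sq

theorem quatRot_flip_mulVec_neg_normalAxis (a : ℂ) :
    quatRot 0 ![0, 0, 1] *ᵥ -normalAxis a = normalAxis a := by
  ext i
  fin_cases i <;> simp [quatRot, normalAxis, mulVec]

end NormalAxis

section NormalForm

variable {f : MvPolynomial (Fin 6) ℝ} {d : ℕ}

theorem IsScaledQuatInvariant.aeval_append_cross_add (hf : IsScaledQuatInvariant ℂ f d)
    (ω r v : Fin 3 → ℂ) : aeval (Fin.append ω (ω ⨯₃ r + v)) f = aeval (Fin.append ω v) f := by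
  simpa [twistAct, quatRot_one_zero, quatNormSq] using hf 1 0 r ω v

theorem IsScaledQuatInvariant.aeval_append_quatRot (hf : IsScaledQuatInvariant ℂ f d) {w : ℂ}
    {u : Fin 3 → ℂ} (hN : quatNormSq w u = 1) (ω v : Fin 3 → ℂ) :
    aeval (Fin.append (quatRot w u *ᵥ ω) (quatRot w u *ᵥ v)) f = aeval (Fin.append ω v) f := by
  simpa [twistAct, hN] using hf w u 0 ω v

theorem IsScaledQuatInvariant.exists_aeval_append_eq (hd : f.IsHomogeneous d)
    (hf : IsScaledQuatInvariant ℂ f d) {a : ℂ} (ha : a ≠ 0) {ω ω' : Fin 3 → ℂ}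
    (hω : ω ⬝ᵥ ω = a) (hω' : ω' ⬝ᵥ ω' = a) (hs : a + ω ⬝ᵥ ω' ≠ 0) (v : Fin 3 → ℂ) :
    ∃ v', aeval (Fin.append ω' v') f = aeval (Fin.append ω v) f ∧ ω' ⬝ᵥ v' = ω ⬝ᵥ v := by
  set M := quatRot (a + ω ⬝ᵥ ω') (ω ⨯₃ ω')
  set ρ := 2 * a * (a + ω ⬝ᵥ ω')
  have hρ : ρ ≠ 0 := mul_ne_zero (mul_ne_zero two_ne_zero ha) hs
  have hMω : M *ᵥ ω = ρ • ω' := quatRot_cross_mulVec hω hω'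
  have hN : quatNormSq (a + ω ⬝ᵥ ω') (ω ⨯₃ ω') = ρ := quatNormSq_cross hω hω'
  refine ⟨ρ⁻¹ • (M *ᵥ v), ?_, ?_⟩
  · have h := hf (a + ω ⬝ᵥ ω') (ω ⨯₃ ω') 0 ω v
    have hact : twistAct M 0 ω v = ρ • Fin.append ω' (ρ⁻¹ • (M *ᵥ v)) := by
      rw [twistAct, hMω, map_zero, zero_add, Fin.smul_append, smul_smul, mul_inv_cancel₀ hρ,
        one_smul]
    rw [hact, hN, hd.aeval_smul] at h
    exact mul_left_cancel₀ (pow_ne_zero d hρ) h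
  · calc ω' ⬝ᵥ (ρ⁻¹ • (M *ᵥ v)) = ρ⁻¹ * ρ⁻¹ * ((M *ᵥ ω) ⬝ᵥ (M *ᵥ v)) := by
          rw [hMω, smul_dotProduct, dotProduct_smul, smul_eq_mul, smul_eq_mul]
          field_simp
      _ = ω ⬝ᵥ v := by
          rw [dotProduct_quatRot_mulVec, hN]
          field_simp

theorem IsScaledQuatInvariant.aeval_append_eq_of_dotProduct_eq (hf : IsScaledQuatInvariant ℂ f d)
    {ω v v' : Fin 3 → ℂ} (hω : ω ⬝ᵥ ω ≠ 0) (hv : ω ⬝ᵥ v = ω ⬝ᵥ v') :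
    aeval (Fin.append ω v) f = aeval (Fin.append ω v') f := by
  have hcross : ω ⨯₃ (-(ω ⬝ᵥ ω)⁻¹ • (ω ⨯₃ (v' - v))) + v = v' := by
    rw [map_smul, cross_cross_eq_smul_sub_smul', dotProduct_sub, hv, sub_self, zero_smul,
      zero_sub, smul_neg, smul_smul, neg_mul, inv_mul_cancel₀ hω, neg_smul, one_smul, neg_neg,
      sub_add_cancel]
  rw [← hcross, hf.aeval_append_cross_add]

theorem IsScaledQuatInvariant.exists_aeval_normalAxis_eq (hd : f.IsHomogeneous d)
    (hf : IsScaledQuatInvariant ℂ f d) {a : ℂ} (ha : a ≠ 0) {ω : Fin 3 → ℂ} (hω : ω ⬝ᵥ ω = a)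
    (v : Fin 3 → ℂ) :
    ∃ v', aeval (Fin.append (normalAxis a) v') f = aeval (Fin.append ω v) f
      ∧ normalAxis a ⬝ᵥ v' = ω ⬝ᵥ v := by
  by_cases hs : a + ω ⬝ᵥ normalAxis a ≠ 0
  · exact hf.exists_aeval_append_eq hd ha hω (normalAxis_dotProduct_self a) hs v
  -- The rotation quaternion from `ω` to `normalAxis a` vanishes here: go to `-normalAxis a`
  -- instead, then turn by `π` about the third axis.
  have hs' : a + ω ⬝ᵥ -normalAxis a ≠ 0 := by
    rw [dotProduct_neg, show ω ⬝ᵥ normalAxis a = -a by linear_combination not_ne_iff.mp hs,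
      neg_neg, ← two_mul]
    exact mul_ne_zero two_ne_zero ha
  obtain ⟨v₁, hv₁, hdot₁⟩ := hf.exists_aeval_append_eq hd ha hω
    (by rw [neg_dotProduct_neg, normalAxis_dotProduct_self]) hs' v
  have hN : quatNormSq (0 : ℂ) ![0, 0, 1] = 1 := by simp [quatNormSq]
  refine ⟨quatRot 0 ![0, 0, 1] *ᵥ v₁, ?_, ?_⟩
  · rw [← hv₁, ← hf.aeval_append_quatRot hN (-normalAxis a) v₁,
      quatRot_flip_mulVec_neg_normalAxis]
  · rw [← hdot₁]
    nth_rewrite 1 [← quatRot_flip_mulVec_neg_normalAxis a]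
    rw [dotProduct_quatRot_mulVec, hN, one_pow, one_mul]

theorem IsScaledQuatInvariant.aeval_append_eq_normalForm (hd : f.IsHomogeneous d)
    (hf : IsScaledQuatInvariant ℂ f d) {ω : Fin 3 → ℂ} (hω : ω ⬝ᵥ ω ≠ 0) (v : Fin 3 → ℂ) :
    aeval (Fin.append ω v) f
      = aeval (Fin.append (normalAxis (ω ⬝ᵥ ω)) (normalMoment (ω ⬝ᵥ v))) f := by
  obtain ⟨v', hv', hdot⟩ := hf.exists_aeval_normalAxis_eq hd hω rfl v
  rw [← hv']
  refine hf.aeval_append_eq_of_dotProduct_eq (by rwa [normalAxis_dotProduct_self]) ?_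
  rw [hdot, normalAxis_dotProduct_normalMoment]

end NormalForm

noncomputable def killingPoly : MvPolynomial (Fin 6) ℝ := X 0 * X 0 + X 1 * X 1 + X 2 * X 2

noncomputable def kleinPoly : MvPolynomial (Fin 6) ℝ := X 0 * X 3 + X 1 * X 4 + X 2 * X 5

theorem eval_killingPoly (ω v : Fin 3 → ℝ) : eval (Fin.append ω v) killingPoly = ω ⬝ᵥ ω := by
  simp only [killingPoly, map_add, map_mul, eval_X, vec3_dotProduct]
  rfl

theorem eval_kleinPoly (ω v : Fin 3 → ℝ) : eval (Fin.append ω v) kleinPoly = ω ⬝ᵥ v := by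
  simp only [kleinPoly, map_add, map_mul, eval_X, vec3_dotProduct]
  rfl

theorem killingPoly_ne_zero : killingPoly ≠ 0 := fun h => by
  have := congrArg (eval 1) h
  norm_num [killingPoly] at this

noncomputable def normalFormProfile (f : MvPolynomial (Fin 6) ℝ) : MvPolynomial (Fin 2) ℝ :=
  rePart (aeval (Fin.append (normalAxis (X 0)) (normalMoment (X 1))) f)

theorem eval_normalFormProfile (f : MvPolynomial (Fin 6) ℝ) (s t : ℝ) :
    eval ![s, t] (normalFormProfile f)
      = (aeval (Fin.append (normalAxis (s : ℂ)) (normalMoment (t : ℂ))) f).re := by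
  let φ := (aeval (fun i => ((![s, t] i : ℝ) : ℂ)) : MvPolynomial (Fin 2) ℂ →ₐ[ℂ] ℂ)
  rw [normalFormProfile, eval_rePart]
  change (φ.restrictScalars ℝ _).re = _
  rw [AlgHom.map_aeval_append, AlgHom.coe_restrictScalars',
    comp_normalAxis, comp_normalMoment, aeval_X, aeval_X]
  rfl

theorem IsSE3Invariant.eq_aeval_normalFormProfile {f : MvPolynomial (Fin 6) ℝ} {d : ℕ}
    (hf : IsSE3Invariant f) (hd : f.IsHomogeneous d) :
    f = aeval ![killingPoly, kleinPoly] (normalFormProfile f) := by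
  have hC := (hf.isScaledQuatInvariant_real hd).of_real ℂ
  refine mul_left_cancel₀ killingPoly_ne_zero (MvPolynomial.funext fun x => ?_)
  obtain ⟨ω, v, rfl⟩ : ∃ ω v : Fin 3 → ℝ, Fin.append ω v = x :=
    ⟨_, _, Fin.append_castAdd_natAdd (m := 3) (n := 3) (f := x)⟩
  rw [map_mul, map_mul, eval_killingPoly]
  rcases eq_or_ne (ω ⬝ᵥ ω) 0 with hω | hω
  · rw [hω, zero_mul, zero_mul]
  congr 1
  have hinvariants : (fun i => eval (Fin.append ω v) (![killingPoly, kleinPoly] i))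
      = ![ω ⬝ᵥ ω, ω ⬝ᵥ v] := by
    ext i
    fin_cases i
    exacts [eval_killingPoly ω v, eval_kleinPoly ω v]
  have hcomplex : aeval (Fin.append (Complex.ofRealHom ∘ ω) (Complex.ofRealHom ∘ v)) f
      = eval (Fin.append ω v) f := by
    rw [← Fin.comp_append]
    exact (comp_aeval_apply (f := Fin.append ω v) (Algebra.ofId ℝ ℂ) f).symm
  have hdot (u w : Fin 3 → ℝ) :
      ((u ⬝ᵥ w : ℝ) : ℂ) = (Complex.ofRealHom ∘ u) ⬝ᵥ (Complex.ofRealHom ∘ w) :=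
    RingHom.map_dotProduct Complex.ofRealHom u w
  have hω' : (Complex.ofRealHom ∘ ω) ⬝ᵥ (Complex.ofRealHom ∘ ω) ≠ 0 := by
    rw [← hdot]
    exact_mod_cast hω
  rw [eval_aeval, hinvariants, eval_normalFormProfile, hdot, hdot,
    ← hC.aeval_append_eq_normalForm hd hω', hcomplex, Complex.ofReal_re]

theorem adjoint_invariants_generated_by_klein_and_killing
    (f : MvPolynomial (Fin 6) ℝ)
    (hf : ∀ R : Matrix (Fin 3) (Fin 3) ℝ, Rᵀ * R = 1 → R.det = 1 →
      ∀ r ω v : Fin 3 → ℝ,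
        MvPolynomial.eval
          (twistCoords (R.mulVec ω) ((R.mulVec ω) ⨯₃ r + R.mulVec v)) f
          = MvPolynomial.eval (twistCoords ω v) f) :
    f ∈ Algebra.adjoin ℝ
      ({X 0 * X 0 + X 1 * X 1 + X 2 * X 2,
        X 0 * X 3 + X 1 * X 4 + X 2 * X 5} :
        Set (MvPolynomial (Fin 6) ℝ)) := by
  have hf' : IsSE3Invariant f := hf
  rw [← range_cons_cons_empty _ _ ![], Algebra.adjoin_range_eq_range_aeval,
    ← sum_homogeneousComponent f]
  refine Subalgebra.sum_mem _ fun d _ => ⟨normalFormProfile (homogeneousComponent d f), ?_⟩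
  exact ((hf'.homogeneousComponent d).eq_aeval_normalFormProfile
    (homogeneousComponent_isHomogeneous d f)).symm
end

section
/- For two twists with ω₁, ω₂ ≠ 0, write cos α = (ω₁·ω₂)/√((ω₁·ω₁)(ω₂·ω₂)). Then both the quantity (ω₁·ω₂)/√((ω₁·ω₁)(ω₂·ω₂)) and the quantity (ω₁·v₂ + ω₂·v₁)/√((ω₁·ω₁)(ω₂·ω₂)) are invariant under the simultaneous adjoint action of SE(3). -/
/-! The rotation part of the action preserves all dot products, and the translation part adds
`Rω₁ ⬝ (Rω₂ × r) + Rω₂ ⬝ (Rω₁ × r)` to the reciprocal product, which vanishes because the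
triple product is alternating. -/

open Matrix

theorem Matrix.mulVec_dotProduct_mulVec_of_transpose_mul_self {n α : Type*} [Fintype n]
    [DecidableEq n] [CommSemiring α] {R : Matrix n n α} (hR : Rᵀ * R = 1) (x y : n → α) :
    R *ᵥ x ⬝ᵥ R *ᵥ y = x ⬝ᵥ y := by
  rw [dotProduct_mulVec, ← vecMul_transpose, vecMul_vecMul, hR, vecMul_one]

theorem dotProduct_cross_add_dotProduct_cross {α : Type*} [CommRing α] (a b r : Fin 3 → α) :
    a ⬝ᵥ b ⨯₃ r + b ⬝ᵥ a ⨯₃ r = 0 := by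
  rw [triple_product_permutation b, ← cross_anticomm, dotProduct_neg, neg_add_cancel]

theorem reciprocalProduct_rigidMotion {R : Matrix (Fin 3) (Fin 3) ℝ} (hR : Rᵀ * R = 1)
    (r ω₁ v₁ ω₂ v₂ : Fin 3 → ℝ) :
    R *ᵥ ω₁ ⬝ᵥ ((R *ᵥ ω₂) ⨯₃ r + R *ᵥ v₂) + R *ᵥ ω₂ ⬝ᵥ ((R *ᵥ ω₁) ⨯₃ r + R *ᵥ v₁)
      = ω₁ ⬝ᵥ v₂ + ω₂ ⬝ᵥ v₁ := by
  have hcross := dotProduct_cross_add_dotProduct_cross (R *ᵥ ω₁) (R *ᵥ ω₂) r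
  simp only [dotProduct_add, mulVec_dotProduct_mulVec_of_transpose_mul_self hR] at hcross ⊢
  linear_combination hcross

theorem dh_quantities_invariant_general
    (R : Matrix (Fin 3) (Fin 3) ℝ) (hR : Rᵀ * R = 1)
    (r ω₁ v₁ ω₂ v₂ : Fin 3 → ℝ) :
    ((R.mulVec ω₁) ⬝ᵥ (R.mulVec ω₂)) /
        Real.sqrt (((R.mulVec ω₁) ⬝ᵥ (R.mulVec ω₁)) * ((R.mulVec ω₂) ⬝ᵥ (R.mulVec ω₂)))
      = (ω₁ ⬝ᵥ ω₂) / Real.sqrt ((ω₁ ⬝ᵥ ω₁) * (ω₂ ⬝ᵥ ω₂)) ∧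
    ((R.mulVec ω₁) ⬝ᵥ (crossProduct (R.mulVec ω₂) r + R.mulVec v₂)
        + (R.mulVec ω₂) ⬝ᵥ (crossProduct (R.mulVec ω₁) r + R.mulVec v₁)) /
        Real.sqrt (((R.mulVec ω₁) ⬝ᵥ (R.mulVec ω₁)) * ((R.mulVec ω₂) ⬝ᵥ (R.mulVec ω₂)))
      = (ω₁ ⬝ᵥ v₂ + ω₂ ⬝ᵥ v₁) / Real.sqrt ((ω₁ ⬝ᵥ ω₁) * (ω₂ ⬝ᵥ ω₂)) := by
  simp only [reciprocalProduct_rigidMotion hR, mulVec_dotProduct_mulVec_of_transpose_mul_self hR,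
    and_self]

theorem dh_quantities_invariant
    (R : Matrix (Fin 3) (Fin 3) ℝ) (hR : Rᵀ * R = 1) (hdet : R.det = 1)
    (r ω₁ v₁ ω₂ v₂ : Fin 3 → ℝ) (h₁ : ω₁ ≠ 0) (h₂ : ω₂ ≠ 0) :
    ((R.mulVec ω₁) ⬝ᵥ (R.mulVec ω₂)) /
        Real.sqrt (((R.mulVec ω₁) ⬝ᵥ (R.mulVec ω₁)) * ((R.mulVec ω₂) ⬝ᵥ (R.mulVec ω₂)))
      = (ω₁ ⬝ᵥ ω₂) / Real.sqrt ((ω₁ ⬝ᵥ ω₁) * (ω₂ ⬝ᵥ ω₂)) ∧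
    ((R.mulVec ω₁) ⬝ᵥ (crossProduct (R.mulVec ω₂) r + R.mulVec v₂)
        + (R.mulVec ω₂) ⬝ᵥ (crossProduct (R.mulVec ω₁) r + R.mulVec v₁)) /
        Real.sqrt (((R.mulVec ω₁) ⬝ᵥ (R.mulVec ω₁)) * ((R.mulVec ω₂) ⬝ᵥ (R.mulVec ω₂)))
      = (ω₁ ⬝ᵥ v₂ + ω₂ ⬝ᵥ v₁) / Real.sqrt ((ω₁ ⬝ᵥ ω₁) * (ω₂ ⬝ᵥ ω₂)) :=
  dh_quantities_invariant_general R hR r ω₁ v₁ ω₂ v₂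
end

section
/- For three twists, each polynomial z₁₂₃, z₂₃₁, z₃₁₂, and each difference z₁₂₁ − z₃₂₃, z₂₃₂ − z₁₃₁, z₃₁₃ − z₂₁₂, where z_{ijk} = det of the 3×3 matrix with rows (ω₁ᵢ, ω₂ᵢ, ω₃ᵢ), (ω₁ⱼ, ω₂ⱼ, ω₃ⱼ), (v₁ₖ, v₂ₖ, v₃ₖ), is invariant under the translation action (ωₗ, vₗ) ↦ (ωₗ, ωₗ×r + vₗ) for all r ∈ ℝ³. -/
/-!
`zdet ω v i j k` is linear in `v`, so translating by `r` adds `zdet ω (ω × r) i j k`. The row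
`l ↦ (ω l × r) k` is `r_b ε_{kab}` times the `a`-th column of `ω`, and the determinant of three
columns of `ω` is `ε_{ija} det ω`; contracting `ε_{kab} ε_{ija} = δ_{kj} δ_{bi} - δ_{ki} δ_{bj}`
gives the correction `det ω (δ_{kj} r_i - δ_{ki} r_j)`. It vanishes when `i, j, k` are distinct, and
for `k = i` it is `-det ω · r_j`, independent of `i`, so it cancels in `z_{iji} - z_{i'ji'}`.
-/

open Matrix

/-- For three twists `(ω l, v l)`, `zdet ω v i j k` is the determinant of the 3×3 matrix
with rows `(ω₁ᵢ, ω₂ᵢ, ω₃ᵢ)`, `(ω₁ⱼ, ω₂ⱼ, ω₃ⱼ)`, `(v₁ₖ, v₂ₖ, v₃ₖ)`. -/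
def zdet (ω v : Fin 3 → (Fin 3 → ℝ)) (i j k : Fin 3) : ℝ :=
  Matrix.det (Matrix.of ![fun l => ω l i, fun l => ω l j, fun l => v l k])

lemma zdet_add (ω v w : Fin 3 → (Fin 3 → ℝ)) (i j k : Fin 3) :
    zdet ω (fun l => v l + w l) i j k = zdet ω v i j k + zdet ω w i j k := by
  simp [zdet, det_fin_three]
  ring

lemma zdet_cross (ω : Fin 3 → (Fin 3 → ℝ)) (r : Fin 3 → ℝ) (i j k : Fin 3) :
    zdet ω (fun l => ω l ⨯₃ r) i j k =
      (of ω).det * ((if k = j then r i else 0) - if k = i then r j else 0) := by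
  fin_cases i <;> fin_cases j <;> fin_cases k <;>
    simp [zdet, det_fin_three, cross_apply] <;> ring

theorem zdet_translation_invariants
    (ω v : Fin 3 → (Fin 3 → ℝ)) (r : Fin 3 → ℝ) :
    zdet ω (fun l => ω l ⨯₃ r + v l) 0 1 2 = zdet ω v 0 1 2 ∧
    zdet ω (fun l => ω l ⨯₃ r + v l) 1 2 0 = zdet ω v 1 2 0 ∧
    zdet ω (fun l => ω l ⨯₃ r + v l) 2 0 1 = zdet ω v 2 0 1 ∧
    zdet ω (fun l => ω l ⨯₃ r + v l) 0 1 0 - zdet ω (fun l => ω l ⨯₃ r + v l) 2 1 2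
      = zdet ω v 0 1 0 - zdet ω v 2 1 2 ∧
    zdet ω (fun l => ω l ⨯₃ r + v l) 1 2 1 - zdet ω (fun l => ω l ⨯₃ r + v l) 0 2 0
      = zdet ω v 1 2 1 - zdet ω v 0 2 0 ∧
    zdet ω (fun l => ω l ⨯₃ r + v l) 2 0 2 - zdet ω (fun l => ω l ⨯₃ r + v l) 1 0 1
      = zdet ω v 2 0 2 - zdet ω v 1 0 1 := by
  simp +decide [zdet_add, zdet_cross]
end
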